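/- arXiv:2509.01284 — 2 statements merged into one kernel-verified Lean document; each statement's English description precedes it below -/
import Mathlib

section
/- A finite field extension L/K is a Galois extension if and only if the K-subalgebra of End_K(L) generated by L and Aut_K(L) equals all of End_K(L) (equivalently, L⋊Aut_K(L) = End_K(L)). -/
/-!
If `L/K` is Galois, Dedekind's independence of characters makes the `n = [L:K]` automorphisms
`L`-linearly independent in `End_K(L)`, so their `L`-span already has `K`-dimension
`n * n = dim_K End_K(L)`. Conversely, every element of `L` fixed by `Aut_K(L)` gives a
multiplication operator commuting with all of `L` and `Aut_K(L)`; if these generate `End_K(L)`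
the operator is central, hence a scalar, so the fixed field of `Aut_K(L)` is `K`.
-/

open Module

theorem Algebra.mem_bot_of_lmul_mem_center {R A : Type*} [CommSemiring R] [Semiring A]
    [Algebra R A] [Free R A] {c : A} (hc : Algebra.lmul R A c ∈ Subalgebra.center R (End R A)) :
    c ∈ (⊥ : Subalgebra R A) := by
  obtain ⟨r, hr⟩ := (Algebra.IsCentral.mem_center_iff R).1 hc
  exact ⟨r, by simpa [Algebra.algebraMap_eq_smul_one] using (LinearMap.congr_fun hr 1).symm⟩

section

variable {K L : Type*} [Field K] [Field L] [Algebra K L]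

theorem restrictScalars_span_le_adjoin_lmul_union (S : Set (End K L)) :
    (Submodule.span L S).restrictScalars K ≤
      Subalgebra.toSubmodule (Algebra.adjoin K (Set.range (Algebra.lmul K L) ∪ S)) := by
  intro f hf
  induction hf using Submodule.span_induction with
  | mem f hf => exact Algebra.subset_adjoin (Or.inr hf)
  | zero => exact zero_mem _
  | add f g _ _ hf hg => exact add_mem hf hg
  | smul a f _ hf =>
    have hsmul : a • f = Algebra.lmul K L a * f := by ext; simp
    rw [hsmul]
    exact Subalgebra.mul_mem _ (Algebra.subset_adjoin (Or.inl ⟨a, rfl⟩)) hf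

theorem finrank_span_algEquiv_toLinearMap [FiniteDimensional K L] :
    finrank L (Submodule.span L (Set.range fun g : L ≃ₐ[K] L => (g.toLinearMap : End K L))) =
      Nat.card (L ≃ₐ[K] L) := by
  rw [Nat.card_eq_fintype_card]
  exact finrank_span_eq_card <| (linearIndependent_algHom_toLinearMap K L L).comp
    (fun g : L ≃ₐ[K] L => g.toAlgHom) AlgEquiv.coe_toAlgHom_injective

theorem adjoin_lmul_union_algEquiv_eq_top [FiniteDimensional K L] [IsGalois K L] :
    Algebra.adjoin K (Set.range (Algebra.lmul K L) ∪
      Set.range fun g : L ≃ₐ[K] L => (g.toLinearMap : End K L)) = ⊤ := by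
  set autSpan := Submodule.span L (Set.range fun g : L ≃ₐ[K] L => (g.toLinearMap : End K L))
  have : Free L autSpan := .of_divisionRing L autSpan
  have hdim : finrank K (autSpan.restrictScalars K) = finrank K (End K L) := by
    rw [show finrank K (autSpan.restrictScalars K) = finrank K autSpan from rfl,
      ← finrank_mul_finrank K L autSpan,
      finrank_span_algEquiv_toLinearMap, IsGalois.card_aut_eq_finrank, finrank_linearMap]
  rw [← Algebra.toSubmodule_eq_top, eq_top_iff, ← Submodule.eq_top_of_finrank_eq hdim]
  exact restrictScalars_span_le_adjoin_lmul_union _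

theorem adjoin_lmul_union_algEquiv_le_centralizer {c : L} (hc : ∀ g : L ≃ₐ[K] L, g c = c) :
    Algebra.adjoin K (Set.range (Algebra.lmul K L) ∪
      Set.range fun g : L ≃ₐ[K] L => (g.toLinearMap : End K L)) ≤
        Subalgebra.centralizer K {Algebra.lmul K L c} := by
  rw [Algebra.adjoin_le_iff]
  rintro f (⟨a, rfl⟩ | ⟨g, rfl⟩) _ rfl
  · rw [← map_mul, ← map_mul, mul_comm]
  · ext x
    simp [hc g]

theorem isGalois_of_adjoin_lmul_union_algEquiv_eq_top [FiniteDimensional K L]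
    (h : Algebra.adjoin K (Set.range (Algebra.lmul K L) ∪
      Set.range fun g : L ≃ₐ[K] L => (g.toLinearMap : End K L)) = ⊤) :
    IsGalois K L := by
  refine IsGalois.of_fixedField_eq_bot K L (eq_bot_iff.2 fun c hc => ?_)
  have hcentral : Algebra.lmul K L c ∈ Subalgebra.center K (End K L) := by
    have hle := adjoin_lmul_union_algEquiv_le_centralizer (fun g => hc ⟨g, Subgroup.mem_top g⟩)
    rw [h, top_le_iff, Subalgebra.centralizer_eq_top_iff_subset] at hle
    exact hle rfl
  exact IntermediateField.mem_bot.2 <|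
    Algebra.mem_bot.1 (Algebra.mem_bot_of_lmul_mem_center hcentral)

end

/-- A finite field extension `L/K` is Galois if and only if the `K`-subalgebra of `End_K(L)`
generated by (the image of) `L` and `Aut_K(L)` is all of `End_K(L)`,
i.e. `L⋊Aut_K(L) = End_K(L)`. -/
theorem stmt12 (K L : Type) [Field K] [Field L] [Algebra K L] [FiniteDimensional K L] :
    IsGalois K L ↔
      Algebra.adjoin K (Set.range (Algebra.lmul K L) ∪
        Set.range fun g : L ≃ₐ[K] L => (g.toLinearMap : Module.End K L)) = ⊤ :=
  ⟨fun _ => adjoin_lmul_union_algEquiv_eq_top, isGalois_of_adjoin_lmul_union_algEquiv_eq_top⟩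
end

section
/- Let L/K be a finite Galois extension with group G. The map Γ ↦ L⋊Gal(L/Γ) is a bijection from the set of intermediate fields Γ with Γ/K Galois to the set of G-conjugation-stable K-subalgebras of End_K(L) containing L; equivalently, the G-stable subalgebras containing L are exactly the L⋊N for N a normal subgroup of G, and every normal subgroup of G is of the form Gal(L/Γ) for a unique Galois intermediate field Γ. -/
/-! By Dedekind's independence of characters and a dimension count, the automorphisms
`g ∈ G` form an `L`-basis of `End_K(L)`. Right multiplication by `x ∈ L` scales the basis
vector `g` by `g x`, and these eigenvalues separate the elements of `G`; hence a subalgebra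
`A ⊇ L`, being stable under all these operators, is spanned by the `g` it contains, i.e.
`A = L⋊N` for the subgroup `N = {g | g ∈ A}`. Conjugation by `h` maps `L g` onto
`L (h g h⁻¹)`, so `A` is `G`-stable exactly when `N` is normal, and the Galois correspondence
matches normal subgroups with Galois subextensions. -/

open Module Submodule

namespace Module.Basis

variable {ι κ R M : Type*}

theorem repr_apply_of_eigenvectors [CommSemiring R] [AddCommMonoid M] [Module R M]
    (b : Basis ι R M) {T : Module.End R M} {c : ι → R} (hT : ∀ i, T (b i) = c i • b i)
    (x : M) (i : ι) : b.repr (T x) i = c i * b.repr x i := by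
  classical
  have : (Finsupp.lapply i ∘ₗ b.repr.toLinearMap) ∘ₗ T =
      c i • (Finsupp.lapply i ∘ₗ b.repr.toLinearMap) := by
    refine b.ext fun j => ?_
    simp only [LinearMap.comp_apply, LinearMap.smul_apply, LinearEquiv.coe_coe, hT, map_smul,
      repr_self, Finsupp.lapply_apply, Finsupp.single_apply, smul_eq_mul]
    split_ifs with h
    · rw [h]
    · simp
  exact LinearMap.congr_fun this x

variable [Field R] [AddCommGroup M] [Module R M]

theorem mem_of_repr_ne_zero_of_eigenvectors (b : Basis ι R M) {T : κ → Module.End R M}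
    {c : κ → ι → R} (hT : ∀ k i, T k (b i) = c k i • b i)
    (hc : Pairwise fun i j => ∃ k, c k i ≠ c k j) {p : Submodule R M}
    (hp : ∀ k, ∀ x ∈ p, T k x ∈ p) {x : M} (hx : x ∈ p) {i : ι} (hi : b.repr x i ≠ 0) :
    b i ∈ p := by
  classical
  induction hn : (b.repr x).support.card using Nat.strong_induction_on generalizing x with
  | _ n ih =>
  by_cases hsupp : (b.repr x).support ⊆ {i}
  · have hx' : x = b.repr x i • b i := by
      conv_lhs => rw [← b.linearCombination_repr x, Finsupp.support_subset_singleton.mp hsupp]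
      simp
    have : b.repr x i • b i ∈ p := hx' ▸ hx
    simpa [smul_smul, inv_mul_cancel₀ hi] using p.smul_mem (b.repr x i)⁻¹ this
  · obtain ⟨j, hj, hji⟩ := Finset.not_subset.mp hsupp
    obtain ⟨k, hk⟩ := hc (Ne.symm (Finset.notMem_singleton.mp hji))
    -- subtracting `c k j • x` from `T k x` kills the `j`-coordinate and keeps the `i`-coordinate
    set y := T k x - c k j • x
    have hy : ∀ l, b.repr y l = (c k l - c k j) * b.repr x l := fun l => by
      simp [y, repr_apply_of_eigenvectors b (hT k), sub_mul]
    have hsub : (b.repr y).support ⊆ (b.repr x).support.erase j := fun l hl => by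
      rw [Finsupp.mem_support_iff, hy] at hl
      exact Finset.mem_erase.mpr
        ⟨fun h => hl (by simp [h]), Finsupp.mem_support_iff.mpr (right_ne_zero_of_mul hl)⟩
    refine ih _ ?_ (x := y) (sub_mem (hp k x hx) (p.smul_mem _ hx)) ?_ rfl
    · rw [← hn]
      exact (Finset.card_le_card hsub).trans_lt (Finset.card_erase_lt_of_mem hj)
    · rw [hy]
      exact mul_ne_zero (sub_ne_zero.mpr hk) hi

theorem eq_span_image_setOf_mem_of_eigenvectors (b : Basis ι R M) {T : κ → Module.End R M}
    {c : κ → ι → R} (hT : ∀ k i, T k (b i) = c k i • b i)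
    (hc : Pairwise fun i j => ∃ k, c k i ≠ c k j) {p : Submodule R M}
    (hp : ∀ k, ∀ x ∈ p, T k x ∈ p) : p = span R (b '' {i | b i ∈ p}) := by
  refine le_antisymm (fun x hx => b.mem_span_image.mpr fun i hi => ?_) ?_
  · exact b.mem_of_repr_ne_zero_of_eigenvectors hT hc hp hx (Finsupp.mem_support_iff.mp hi)
  · exact span_le.mpr (Set.image_subset_iff.mpr fun _ h => h)

end Module.Basis

theorem Submonoid.inv_mem_of_finite {G : Type*} [Group G] [Finite G] (S : Submonoid G) {g : G}
    (hg : g ∈ S) : g⁻¹ ∈ S :=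
  Submonoid.powers_le.mpr hg <|
    (isOfFinOrder_of_finite g).mem_powers_iff_mem_zpowers.mpr (inv_mem (Subgroup.mem_zpowers g))

variable {K L : Type*} [Field K] [Field L] [Algebra K L]

theorem Algebra.lmul_mul_eq_smul (x : L) (φ : Module.End K L) :
    Algebra.lmul K L x * φ = x • φ := rfl

theorem AlgEquiv.toLinearMap_mul_smul (g : Gal(L/K)) (x : L) (φ : Module.End K L) :
    g.toLinearMap * (x • φ) = g x • (g.toLinearMap * φ) :=
  LinearMap.ext fun _ => map_mul g _ _

theorem AlgEquiv.toLinearMap_mul_lmul (g : Gal(L/K)) (x : L) :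
    g.toLinearMap * Algebra.lmul K L x = g x • (g.toLinearMap : Module.End K L) :=
  LinearMap.ext fun _ => map_mul g _ _

theorem AlgEquiv.toLinearMap_mul_mul_symm (g h : Gal(L/K)) :
    g.toLinearMap * h.toLinearMap * g.symm.toLinearMap =
      ((g * h * g⁻¹ : Gal(L/K)).toLinearMap : Module.End K L) := rfl

namespace IsGalois

variable (K L) [FiniteDimensional K L] [IsGalois K L]

noncomputable def endBasis : Basis Gal(L/K) L (Module.End K L) :=
  basisOfLinearIndependentOfCardEqFinrank
    ((linearIndependent_toLinearMap K L L).comp _ AlgEquiv.coe_toAlgHom_injective)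
    (by rw [finrank_linearMap_self, ← Nat.card_eq_fintype_card, card_aut_eq_finrank])

@[simp]
theorem coe_endBasis : ⇑(endBasis K L) = AlgEquiv.toLinearMap :=
  coe_basisOfLinearIndependentOfCardEqFinrank _ _

end IsGalois

namespace Subgroup

variable (N : Subgroup Gal(L/K))

theorem toLinearMap_mul_mem_span_toLinearMap_image {g : Gal(L/K)} (hg : g ∈ N)
    {φ : Module.End K L} (hφ : φ ∈ span L (AlgEquiv.toLinearMap '' (N : Set Gal(L/K)))) :
    g.toLinearMap * φ ∈ span L (AlgEquiv.toLinearMap '' (N : Set Gal(L/K))) := by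
  induction hφ using span_induction with
  | mem _ hψ =>
    obtain ⟨h, hh, rfl⟩ := hψ
    exact subset_span ⟨g * h, mul_mem hg hh, rfl⟩
  | zero => simp
  | add _ _ _ _ hψ hχ => rw [mul_add]; exact add_mem hψ hχ
  | smul x _ _ hψ => rw [AlgEquiv.toLinearMap_mul_smul]; exact smul_mem _ _ hψ

theorem mul_mem_span_toLinearMap_image {φ ψ : Module.End K L}
    (hφ : φ ∈ span L (AlgEquiv.toLinearMap '' (N : Set Gal(L/K))))
    (hψ : ψ ∈ span L (AlgEquiv.toLinearMap '' (N : Set Gal(L/K)))) :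
    φ * ψ ∈ span L (AlgEquiv.toLinearMap '' (N : Set Gal(L/K))) := by
  induction hφ using span_induction with
  | mem _ hχ =>
    obtain ⟨g, hg, rfl⟩ := hχ
    exact N.toLinearMap_mul_mem_span_toLinearMap_image hg hψ
  | zero => simp
  | add _ _ _ _ hχ hω => rw [add_mul]; exact add_mem hχ hω
  | smul x _ _ hχ => rw [smul_mul_assoc]; exact smul_mem _ _ hχ

/-- `L⋊N = ⊕_{g ∈ N} L g`. -/
noncomputable def skewGroupSubalgebra : Subalgebra K (Module.End K L) :=
  ((span L (AlgEquiv.toLinearMap '' (N : Set Gal(L/K)))).restrictScalars K).toSubalgebra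
    (subset_span ⟨1, N.one_mem, rfl⟩) fun _ _ => N.mul_mem_span_toLinearMap_image

theorem mem_skewGroupSubalgebra {φ : Module.End K L} :
    φ ∈ N.skewGroupSubalgebra ↔ φ ∈ span L (AlgEquiv.toLinearMap '' (N : Set Gal(L/K))) :=
  Iff.rfl

theorem coe_skewGroupSubalgebra :
    (N.skewGroupSubalgebra : Set (Module.End K L)) =
      span L (AlgEquiv.toLinearMap '' (N : Set Gal(L/K))) := rfl

theorem lmul_range_le_skewGroupSubalgebra :
    (Algebra.lmul K L).range ≤ N.skewGroupSubalgebra := by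
  rintro _ ⟨x, rfl⟩
  change x • (1 : Gal(L/K)).toLinearMap ∈ N.skewGroupSubalgebra
  exact smul_mem _ x (subset_span ⟨1, N.one_mem, rfl⟩)

theorem adjoin_eq_skewGroupSubalgebra :
    Algebra.adjoin K
        (Set.range (Algebra.lmul K L) ∪ AlgEquiv.toLinearMap '' (N : Set Gal(L/K))) =
      N.skewGroupSubalgebra := by
  refine le_antisymm (Algebra.adjoin_le (Set.union_subset ?_ subset_span)) fun φ hφ => ?_
  · exact Set.range_subset_iff.mpr fun x => N.lmul_range_le_skewGroupSubalgebra ⟨x, rfl⟩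
  · induction hφ using span_induction with
    | mem _ hψ => exact Algebra.subset_adjoin (Or.inr hψ)
    | zero => exact zero_mem _
    | add _ _ _ _ hψ hχ => exact add_mem hψ hχ
    | smul x _ _ hψ =>
      rw [← Algebra.lmul_mul_eq_smul]
      exact mul_mem (Algebra.subset_adjoin (Or.inl ⟨x, rfl⟩)) hψ

theorem conj_mem_skewGroupSubalgebra [N.Normal] (g : Gal(L/K)) {φ : Module.End K L}
    (hφ : φ ∈ N.skewGroupSubalgebra) :
    g.toLinearMap * φ * g.symm.toLinearMap ∈ N.skewGroupSubalgebra := by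
  rw [mem_skewGroupSubalgebra] at hφ ⊢
  induction hφ using span_induction with
  | mem _ hψ =>
    obtain ⟨h, hh, rfl⟩ := hψ
    rw [AlgEquiv.toLinearMap_mul_mul_symm]
    exact subset_span ⟨_, Normal.conj_mem ‹_› h hh g, rfl⟩
  | zero => simp
  | add _ _ _ _ hψ hχ => rw [mul_add, add_mul]; exact add_mem hψ hχ
  | smul x _ _ hψ =>
    rw [AlgEquiv.toLinearMap_mul_smul, smul_mul_assoc]
    exact smul_mem _ _ hψ

variable [FiniteDimensional K L] [IsGalois K L]

theorem toLinearMap_mem_skewGroupSubalgebra {g : Gal(L/K)} :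
    g.toLinearMap ∈ N.skewGroupSubalgebra ↔ g ∈ N := by
  rw [mem_skewGroupSubalgebra, ← IsGalois.coe_endBasis K L]
  exact (IsGalois.endBasis K L).self_mem_span_image

theorem skewGroupSubalgebra_injective :
    Function.Injective
      (skewGroupSubalgebra : Subgroup Gal(L/K) → Subalgebra K (Module.End K L)) :=
  fun N M h => ext fun _ => by
    rw [← toLinearMap_mem_skewGroupSubalgebra, h, toLinearMap_mem_skewGroupSubalgebra]

end Subgroup

namespace Subalgebra

variable (A : Subalgebra K (Module.End K L))

def toSubmoduleOfLmulRangeLE (hA : (Algebra.lmul K L).range ≤ A) :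
    Submodule L (Module.End K L) where
  carrier := A
  add_mem' := add_mem
  zero_mem' := zero_mem A
  smul_mem' x _ hφ := mul_mem (hA ⟨x, rfl⟩) hφ

variable [FiniteDimensional K L]

noncomputable def autSubgroup : Subgroup Gal(L/K) where
  toSubmonoid := A.toSubmonoid.comap (AlgEquiv.toLinearMapHom K L)
  inv_mem' hg := Submonoid.inv_mem_of_finite _ hg

theorem autSubgroup_normal
    (hA : ∀ g : Gal(L/K), ∀ φ ∈ A, g.toLinearMap * φ * g.symm.toLinearMap ∈ A) :
    A.autSubgroup.Normal :=
  ⟨fun _ hh g => hA g _ hh⟩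

variable [IsGalois K L]

theorem eq_skewGroupSubalgebra_autSubgroup (hA : (Algebra.lmul K L).range ≤ A) :
    A = A.autSubgroup.skewGroupSubalgebra := by
  have := (IsGalois.endBasis K L).eq_span_image_setOf_mem_of_eigenvectors
    (T := fun x => LinearMap.mulRight L (Algebra.lmul K L x)) (c := fun x g => g x)
    (p := A.toSubmoduleOfLmulRangeLE hA)
    (fun x g => by simpa using AlgEquiv.toLinearMap_mul_lmul g x)
    (fun g h hgh => by simpa using not_forall.mp (mt AlgEquiv.ext hgh))
    (fun x φ hφ => A.mul_mem hφ (hA ⟨x, rfl⟩))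
  simp only [IsGalois.coe_endBasis] at this
  exact SetLike.ext' (congrArg (SetLike.coe : Submodule L (Module.End K L) → _) this)

theorem skewGroupSubalgebra_eq_iff_eq_autSubgroup (hA : (Algebra.lmul K L).range ≤ A)
    {N : Subgroup Gal(L/K)} : N.skewGroupSubalgebra = A ↔ N = A.autSubgroup := by
  conv_lhs => rw [A.eq_skewGroupSubalgebra_autSubgroup hA]
  exact Subgroup.skewGroupSubalgebra_injective.eq_iff

end Subalgebra

theorem IsGalois.existsUnique_isGalois_fixingSubgroup_eq [FiniteDimensional K L] [IsGalois K L]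
    (N : Subgroup Gal(L/K)) [N.Normal] :
    ∃! Γ : IntermediateField K L, IsGalois K Γ ∧ Γ.fixingSubgroup = N :=
  ⟨.fixedField N, ⟨inferInstance, IntermediateField.fixingSubgroup_fixedField N⟩,
    fun Γ ⟨_, hΓ⟩ => hΓ ▸ (fixedField_fixingSubgroup Γ).symm⟩

/-- Let `L/K` be a finite Galois extension with group `G`, inside `E = End_K(L) = L⋊G`.
The map `Γ ↦ L⋊Gal(L/Γ)` is a bijection from the Galois intermediate fields onto the
`G`-conjugation-stable `K`-subalgebras of `E` containing `L`; equivalently, the `G`-stable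
subalgebras containing `L` are exactly the `L⋊N` for `N ⊴ G` normal, and every normal
subgroup of `G` is `Gal(L/Γ)` for a unique Galois intermediate field `Γ`. -/
theorem stmt19 (K L : Type) [Field K] [Field L] [Algebra K L] [FiniteDimensional K L]
    [IsGalois K L] :
    letI F : IntermediateField K L → Subalgebra K (Module.End K L) := fun Γ =>
      Algebra.adjoin K (Set.range (Algebra.lmul K L) ∪
        (fun g : L ≃ₐ[K] L => (g.toLinearMap : Module.End K L)) ''
          (Γ.fixingSubgroup : Set (L ≃ₐ[K] L)))
    letI Gstable : Subalgebra K (Module.End K L) → Prop := fun A =>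
      ∀ g : L ≃ₐ[K] L, ∀ a ∈ A,
        (g.toLinearMap : Module.End K L) * a * (g.symm.toLinearMap : Module.End K L) ∈ A
    -- the map is well defined on Galois intermediate fields
    (∀ Γ : IntermediateField K L, IsGalois K Γ →
        (Algebra.lmul K L).range ≤ F Γ ∧ Gstable (F Γ)) ∧
    -- it is a bijection onto the `G`-stable subalgebras containing `L`
    (∀ A : Subalgebra K (Module.End K L), (Algebra.lmul K L).range ≤ A → Gstable A →
        ∃! Γ : IntermediateField K L, IsGalois K Γ ∧ F Γ = A) ∧
    -- the `G`-stable subalgebras containing `L` are exactly the `L⋊N`, `N ⊴ G`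
    (∀ A : Subalgebra K (Module.End K L), (Algebra.lmul K L).range ≤ A →
        (Gstable A ↔ ∃ N : Subgroup (L ≃ₐ[K] L), N.Normal ∧
          (A : Set (Module.End K L)) =
            (Submodule.span L ((fun g : L ≃ₐ[K] L => (g.toLinearMap : Module.End K L)) ''
                (N : Set (L ≃ₐ[K] L))) :
              Submodule L (Module.End K L)))) ∧
    -- every normal subgroup is `Gal(L/Γ)` for a unique Galois intermediate field `Γ`
    (∀ N : Subgroup (L ≃ₐ[K] L), N.Normal →
        ∃! Γ : IntermediateField K L, IsGalois K Γ ∧ Γ.fixingSubgroup = N) := by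
  beta_reduce
  have hF (Γ : IntermediateField K L) := Γ.fixingSubgroup.adjoin_eq_skewGroupSubalgebra
  refine ⟨fun Γ _ => ?_, fun A hA hstable => ?_, fun A hA => ⟨fun hstable => ?_, ?_⟩,
    fun N _ => IsGalois.existsUnique_isGalois_fixingSubgroup_eq N⟩
  · have := IsGalois.fixingSubgroup_normal_of_isGalois Γ
    rw [hF]
    exact ⟨Γ.fixingSubgroup.lmul_range_le_skewGroupSubalgebra,
      fun g _ => Γ.fixingSubgroup.conj_mem_skewGroupSubalgebra g⟩
  · have := A.autSubgroup_normal hstable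
    refine (existsUnique_congr fun Γ => and_congr_right' ?_).mpr
      (IsGalois.existsUnique_isGalois_fixingSubgroup_eq A.autSubgroup)
    rw [hF, A.skewGroupSubalgebra_eq_iff_eq_autSubgroup hA]
  · refine ⟨A.autSubgroup, A.autSubgroup_normal hstable, ?_⟩
    rw [← Subgroup.coe_skewGroupSubalgebra, ← A.eq_skewGroupSubalgebra_autSubgroup hA]
  · rintro ⟨N, hN, hAN⟩ g φ hφ
    obtain rfl : A = N.skewGroupSubalgebra := SetLike.ext' hAN
    exact N.conj_mem_skewGroupSubalgebra g hφ
end
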